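/- Consider the parametric optimization min_{u} ½[1; x; u]ᵀ Γ [1; x; u] subject to Wx + Su + p ≤ 0, with Γ^{uu} positive definite. For each index set a of constraints, let ρ^a(x) denote the solution of the equality-constrained problem with constraints indexed by a active (affine in x where defined), and let X_a = { x : ρ^a(x) exists, is feasible, and satisfies the optimality conditions with multipliers ≥ 0 }. Then each X_a is a polyhedron, the sets X_a over all index sets a cover the feasible parameter set X = { x : ∃u, Wx + Su + p ≤ 0 }, and the optimal solution map x ↦ u⋆(x) is piecewise affine: on each X_a it equals the affine map ρ^a. -/

import Mathlib

open Matrix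

/-- The candidate affine policy associated with an active index set `a`. -/
noncomputable def rhoA {nq nu m : ℕ} (K : Finset (Fin m) → Matrix (Fin nu) (Fin nq) ℝ)
    (s : Finset (Fin m) → (Fin nu → ℝ)) (a : Finset (Fin m))
    (x : Fin nq → ℝ) : Fin nu → ℝ :=
  (K a).mulVec x + s a

/-- The quadratic cost (in `u`, parameterized by `x`) of the parametric QP. -/
noncomputable def qpCost {nq nu : ℕ} (F : Matrix (Fin nu) (Fin nu) ℝ)
    (P : Matrix (Fin nu) (Fin nq) ℝ) (H : Fin nu → ℝ)
    (x : Fin nq → ℝ) (u : Fin nu → ℝ) : ℝ :=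
  (1 / 2) * (u ⬝ᵥ F.mulVec u) + (P.mulVec x + H) ⬝ᵥ u

/-- The region `X_a` of parameters on which the affine policy for active set `a`
is feasible and satisfies the optimality (cone of active-row) condition. -/
def Xa {nq nu m : ℕ} (F : Matrix (Fin nu) (Fin nu) ℝ)
    (P : Matrix (Fin nu) (Fin nq) ℝ) (H : Fin nu → ℝ)
    (W : Matrix (Fin m) (Fin nq) ℝ) (S : Matrix (Fin m) (Fin nu) ℝ) (p : Fin m → ℝ)
    (K : Finset (Fin m) → Matrix (Fin nu) (Fin nq) ℝ)
    (s : Finset (Fin m) → (Fin nu → ℝ)) (a : Finset (Fin m)) : Set (Fin nq → ℝ) :=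
  {x | (∀ j, W.mulVec x j + S.mulVec (rhoA K s a x) j + p j ≤ 0) ∧
    ∃ lam : Fin m → ℝ, (∀ j, 0 ≤ lam j) ∧ (∀ j ∉ a, lam j = 0) ∧
      -(F.mulVec (rhoA K s a x) + P.mulVec x + H) = Sᵀ.mulVec lam}

/-!
On `X_a` the candidate `ρ^a(x)` satisfies the KKT conditions with the multipliers `λ`, and for a
strictly convex quadratic cost these force every feasible `u` to cost at least
`q(ρ^a(x)) + ½ (u - ρ^a(x))ᵀ F (u - ρ^a(x))`; hence `u⋆(x) = ρ^a(x)`. Conversely, at the optimum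
`u⋆(x)` the cost cannot decrease along any direction that keeps the active set `A` feasible, so by
Farkas' lemma `-∇q(u⋆(x))` lies in the cone spanned by the active rows of `S`. These multipliers
make `u⋆(x)` optimal also for the equality-constrained problem on `A`, whence `ρ^A(x) = u⋆(x)` and
`x ∈ X_A`.

Both Farkas' lemma and the polyhedrality of `X_a` come from Fourier–Motzkin elimination: the cone
of multipliers is the projection of the polyhedron `{(g, λ) | λ ≥ 0, supp λ ⊆ a, g = Sᵀλ}`, and
`X_a` is cut out by affine conditions on `x` and the membership of an affine function of `x` in
that cone.
-/

open Filter Topology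

section Polyhedral

variable {E E' : Type*} [AddCommGroup E] [Module ℝ E] [AddCommGroup E'] [Module ℝ E']

def IsPolyhedral (s : Set E) : Prop :=
  ∃ C : Set (E →ᵃ[ℝ] ℝ), C.Finite ∧ s = {x | ∀ g ∈ C, g x ≤ 0}

theorem isPolyhedral_setOf_forall_nonpos {ι : Type*} [Finite ι] (g : ι → E →ᵃ[ℝ] ℝ) :
    IsPolyhedral {x | ∀ i, g i x ≤ 0} :=
  ⟨Set.range g, Set.finite_range g, by simp⟩

theorem IsPolyhedral.inter {s t : Set E} (hs : IsPolyhedral s) (ht : IsPolyhedral t) :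
    IsPolyhedral (s ∩ t) := by
  obtain ⟨C, hC, rfl⟩ := hs
  obtain ⟨D, hD, rfl⟩ := ht
  exact ⟨C ∪ D, hC.union hD, by ext; simp [or_imp, forall_and]⟩

theorem IsPolyhedral.preimage {s : Set E} (hs : IsPolyhedral s) (f : E' →ᵃ[ℝ] E) :
    IsPolyhedral (f ⁻¹' s) := by
  obtain ⟨C, hC, rfl⟩ := hs
  exact ⟨(·.comp f) '' C, hC.image _, by ext; simp⟩

theorem exists_forall_le_forall_ge_of_finite {L U : Set ℝ} (hL : L.Finite) (hU : U.Finite)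
    (h : ∀ l ∈ L, ∀ u ∈ U, l ≤ u) : ∃ t, (∀ l ∈ L, l ≤ t) ∧ ∀ u ∈ U, t ≤ u := by
  rcases L.eq_empty_or_nonempty with rfl | hne
  · obtain ⟨b, hb⟩ := hU.bddBelow
    exact ⟨b, by simp, fun u hu => hb hu⟩
  · exact ⟨sSup L, fun l hl => le_csSup hL.bddAbove hl,
      fun u hu => csSup_le hne fun l hl => h l hl u hu⟩

/-- Fourier–Motzkin elimination of one real variable. -/
theorem exists_forall_add_mul_nonpos_iff {α : Type*} {s : Set α} (hs : s.Finite) (f c : α → ℝ) :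
    (∃ t, ∀ i ∈ s, f i + t * c i ≤ 0) ↔
      (∀ i ∈ s, c i = 0 → f i ≤ 0) ∧
        ∀ i ∈ s, 0 < c i → ∀ j ∈ s, c j < 0 → f i / c i ≤ f j / c j := by
  constructor
  · rintro ⟨t, ht⟩
    refine ⟨fun i hi hci => by simpa [hci] using ht i hi, fun i hi hci j hj hcj => ?_⟩
    calc f i / c i ≤ -t := by rw [div_le_iff₀ hci]; linarith [ht i hi]
      _ ≤ f j / c j := by rw [le_div_iff_of_neg hcj]; linarith [ht j hj]
  · rintro ⟨hzero, hpair⟩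
    obtain ⟨t, hlo, hup⟩ := exists_forall_le_forall_ge_of_finite
      ((hs.inter_of_left {j | c j < 0}).image fun j => -(f j / c j))
      ((hs.inter_of_left {i | 0 < c i}).image fun i => -(f i / c i))
      (by
        rintro _ ⟨j, ⟨hj, hcj⟩, rfl⟩ _ ⟨i, ⟨hi, hci⟩, rfl⟩
        exact neg_le_neg (hpair i hi hci j hj hcj))
    refine ⟨t, fun i hi => ?_⟩
    rcases lt_trichotomy (c i) 0 with hci | hci | hci
    · have := hlo _ ⟨i, ⟨hi, hci⟩, rfl⟩
      rw [neg_le, le_div_iff_of_neg hci] at this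
      linarith
    · simpa [hci] using hzero i hi hci
    · have := hup _ ⟨i, ⟨hi, hci⟩, rfl⟩
      rw [le_neg, div_le_iff₀ hci] at this
      linarith

theorem IsPolyhedral.image_fst_of_prod_real {s : Set (E × ℝ)} (hs : IsPolyhedral s) :
    IsPolyhedral (Prod.fst '' s) := by
  obtain ⟨C, hC, rfl⟩ := hs
  let base (g : E × ℝ →ᵃ[ℝ] ℝ) : E →ᵃ[ℝ] ℝ := g.comp (LinearMap.inl ℝ E ℝ).toAffineMap
  let slope (g : E × ℝ →ᵃ[ℝ] ℝ) : ℝ := g.linear (0, 1)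
  have hsplit (g : E × ℝ →ᵃ[ℝ] ℝ) (y : E) (t : ℝ) : g (y, t) = base g y + t * slope g := by
    rw [show ((y, t) : E × ℝ) = t • ((0 : E), (1 : ℝ)) +ᵥ (y, (0 : ℝ)) by simp,
      AffineMap.map_vadd, map_smul]
    simp [base, slope, add_comm]
  refine ⟨base '' {g ∈ C | slope g = 0} ∪
      Set.image2 (fun g h => (slope g)⁻¹ • base g - (slope h)⁻¹ • base h)
        {g ∈ C | 0 < slope g} {h ∈ C | slope h < 0},
      ((hC.inter_of_left _).image _).union
        ((hC.inter_of_left _).image2 _ (hC.inter_of_left _)), ?_⟩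
  ext y
  simp only [Set.mem_image, Set.mem_ofPred_eq, Prod.exists, exists_and_right, exists_eq_right,
    hsplit]
  rw [exists_forall_add_mul_nonpos_iff hC]
  simp only [Set.mem_union, or_imp, forall_and, Set.forall_mem_image, Set.forall_mem_image2,
    Set.mem_ofPred_eq, and_imp, AffineMap.coe_sub, AffineMap.coe_smul, Pi.sub_apply,
    Pi.smul_apply, smul_eq_mul, sub_nonpos, div_eq_inv_mul]

theorem IsPolyhedral.image_fst {m : ℕ} {s : Set (E × (Fin m → ℝ))} (hs : IsPolyhedral s) :
    IsPolyhedral (Prod.fst '' s) := by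
  induction m generalizing E with
  | zero =>
    convert hs.preimage (LinearMap.inl ℝ E (Fin 0 → ℝ)).toAffineMap using 1
    ext y
    simp [Unique.eq_default]
  | succ m ih =>
    let φ :=
      (LinearEquiv.prodAssoc ℝ E ℝ (Fin m → ℝ)).trans
        ((LinearEquiv.refl ℝ E).prodCongr (Fin.consLinearEquiv ℝ fun _ => ℝ))
    convert (ih (hs.preimage φ.toLinearMap.toAffineMap)).image_fst_of_prod_real using 1
    ext y
    simp only [Set.mem_image, Set.mem_preimage, Prod.exists, exists_and_right, exists_eq_right]
    constructor
    · rintro ⟨w, hw⟩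
      refine ⟨w 0, Fin.tail w, ?_⟩
      change (y, Fin.cons (w 0) (Fin.tail w)) ∈ s
      rwa [Fin.cons_self_tail]
    · rintro ⟨t, z, hz⟩
      exact ⟨Fin.cons t z, hz⟩

theorem IsPolyhedral.exists_matrix {n : Type*} [Fintype n] [DecidableEq n] {s : Set (n → ℝ)}
    (hs : IsPolyhedral s) :
    ∃ (k : ℕ) (L : Matrix (Fin k) n ℝ) (l : Fin k → ℝ), s = {x | ∀ i, (L *ᵥ x) i + l i ≤ 0} := by
  obtain ⟨C, hC, rfl⟩ := hs
  have := hC.to_subtype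
  let e := Finite.equivFin C
  refine ⟨Nat.card C, Matrix.of fun i => (dotProductEquiv ℝ n).symm (e.symm i).1.linear,
    fun i => (e.symm i).1 0, ?_⟩
  have hdecomp (g : (n → ℝ) →ᵃ[ℝ] ℝ) (x : n → ℝ) :
      g x = (dotProductEquiv ℝ n).symm g.linear ⬝ᵥ x + g 0 := by
    rw [← dotProductEquiv_apply_apply, LinearEquiv.apply_symm_apply]
    exact congrFun g.decomp x
  ext x
  simp only [Set.mem_ofPred_eq, mulVec, of_apply, ← hdecomp]
  rw [e.symm.forall_congr_right (q := fun g : C => g.1 x ≤ 0), Subtype.forall]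

/-- Farkas' lemma for polyhedral cones. -/
theorem IsPolyhedral.exists_linear_pos_of_notMem {s : Set E} (hs : IsPolyhedral s)
    (h0 : (0 : E) ∈ s) (hsmul : ∀ t : ℝ, 0 ≤ t → ∀ x ∈ s, t • x ∈ s) {v : E} (hv : v ∉ s) :
    ∃ f : E →ₗ[ℝ] ℝ, 0 < f v ∧ ∀ x ∈ s, f x ≤ 0 := by
  obtain ⟨C, -, rfl⟩ := hs
  obtain ⟨g, hg, hgv⟩ : ∃ g ∈ C, 0 < g v := by simpa using hv
  have hdecomp (x : E) : g x = g.linear x + g 0 := congrFun g.decomp x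
  have hg0 : g 0 ≤ 0 := h0 g hg
  refine ⟨g.linear, by linarith [hdecomp v], fun x hx => ?_⟩
  by_contra! hpos
  have := hsmul ((1 - g 0) / g.linear x) (by bound) x hx g hg
  rw [hdecomp, map_smul, smul_eq_mul, div_mul_cancel₀ _ hpos.ne'] at this
  linarith

variable {ι n : Type*}

theorem isPolyhedral_Iic_zero [Finite ι] : IsPolyhedral (Set.Iic (0 : ι → ℝ)) := by
  rw [show Set.Iic (0 : ι → ℝ) = {x | ∀ i, x i ≤ 0} from Set.ext fun _ => Pi.le_def]
  exact isPolyhedral_setOf_forall_nonpos fun i : ι => (LinearMap.proj (R := ℝ) i).toAffineMap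

theorem isPolyhedral_Ici_zero [Finite ι] : IsPolyhedral (Set.Ici (0 : ι → ℝ)) := by
  rw [show Set.Ici (0 : ι → ℝ) = {x | ∀ i, -x i ≤ 0} by ext; simp [Pi.le_def]]
  exact isPolyhedral_setOf_forall_nonpos fun i : ι => -(LinearMap.proj (R := ℝ) i).toAffineMap

theorem isPolyhedral_singleton_zero [Finite ι] : IsPolyhedral ({0} : Set (ι → ℝ)) := by
  simpa [Set.Iic_inter_Ici] using isPolyhedral_Iic_zero.inter (isPolyhedral_Ici_zero (ι := ι))

theorem IsPolyhedral.preimage_mulVec_add [Fintype n] {s : Set (ι → ℝ)} (hs : IsPolyhedral s)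
    (M : Matrix ι n ℝ) (c : ι → ℝ) : IsPolyhedral {x | M *ᵥ x + c ∈ s} :=
  hs.preimage (M.mulVecLin.toAffineMap + AffineMap.const ℝ (n → ℝ) c)

end Polyhedral

section MultiplierCone

variable {nu m : ℕ} (S : Matrix (Fin m) (Fin nu) ℝ)

def multiplierCone (a : Finset (Fin m)) : Set (Fin nu → ℝ) :=
  {g | ∃ lam : Fin m → ℝ, (∀ j, 0 ≤ lam j) ∧ (∀ j ∉ a, lam j = 0) ∧ g = Sᵀ *ᵥ lam}

theorem isPolyhedral_multiplierCone (a : Finset (Fin m)) :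
    IsPolyhedral (multiplierCone S a) := by
  let fst := LinearMap.fst ℝ (Fin nu → ℝ) (Fin m → ℝ)
  let snd := LinearMap.snd ℝ (Fin nu → ℝ) (Fin m → ℝ)
  let offSupport := LinearMap.funLeft ℝ ℝ ((↑) : {j // j ∉ a} → Fin m)
  have hQ := ((isPolyhedral_Ici_zero.preimage snd.toAffineMap).inter
    (isPolyhedral_singleton_zero.preimage (offSupport ∘ₗ snd).toAffineMap)).inter
    (isPolyhedral_singleton_zero.preimage (fst - Sᵀ.mulVecLin ∘ₗ snd).toAffineMap)
  convert hQ.image_fst using 1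
  ext g
  simp [multiplierCone, fst, snd, offSupport, sub_eq_zero, Pi.le_def, mulVec_transpose,
    funext_iff (f := (0 : {j // j ∉ a} → ℝ)), Subtype.forall, and_assoc, eq_comm]

theorem zero_mem_multiplierCone (a : Finset (Fin m)) : (0 : Fin nu → ℝ) ∈ multiplierCone S a :=
  ⟨0, fun _ => le_rfl, fun _ _ => rfl, by simp⟩

variable {S}

theorem smul_mem_multiplierCone {a : Finset (Fin m)} {t : ℝ} (ht : 0 ≤ t) {g : Fin nu → ℝ}
    (hg : g ∈ multiplierCone S a) : t • g ∈ multiplierCone S a := by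
  obtain ⟨lam, hlam, hsupp, rfl⟩ := hg
  exact ⟨t • lam, fun j => mul_nonneg ht (hlam j), fun j hj => by simp [hsupp j hj],
    by rw [mulVec_smul]⟩

theorem row_mem_multiplierCone {a : Finset (Fin m)} {j : Fin m} (hj : j ∈ a) :
    S j ∈ multiplierCone S a := by
  refine ⟨Pi.single j 1, fun i => ?_, fun i hi => ?_, ?_⟩
  · by_cases h : i = j <;> simp [h]
  · simp [(ne_of_mem_of_not_mem hj hi).symm]
  · ext i
    simp [mulVec_single]

end MultiplierCone

def feasibleSet {nq nu m : ℕ} (W : Matrix (Fin m) (Fin nq) ℝ) (S : Matrix (Fin m) (Fin nu) ℝ)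
    (p : Fin m → ℝ) (x : Fin nq → ℝ) : Set (Fin nu → ℝ) :=
  {u | ∀ j, (W *ᵥ x) j + (S *ᵥ u) j + p j ≤ 0}

noncomputable def activeSet {nq nu m : ℕ} (W : Matrix (Fin m) (Fin nq) ℝ)
    (S : Matrix (Fin m) (Fin nu) ℝ) (p : Fin m → ℝ) (x : Fin nq → ℝ) (u : Fin nu → ℝ) :
    Finset (Fin m) :=
  {j | (W *ᵥ x) j + (S *ᵥ u) j + p j = 0}

theorem eventually_forall_add_mul_nonpos {ι : Type*} [Finite ι] {v w : ι → ℝ}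
    (hv : ∀ j, v j ≤ 0) (hw : ∀ j, v j = 0 → w j ≤ 0) :
    ∀ᶠ ε in 𝓝[>] (0 : ℝ), ∀ j, v j + ε * w j ≤ 0 := by
  refine eventually_all.mpr fun j => ?_
  rcases (hv j).lt_or_eq with hvj | hvj
  · have hcont : Tendsto (fun ε : ℝ => v j + ε * w j) (𝓝 0) (𝓝 (v j)) := by
      simpa using (by fun_prop : Continuous fun ε : ℝ => v j + ε * w j).tendsto 0
    exact nhdsWithin_le_nhds (hcont.eventually (eventually_le_nhds hvj))
  · filter_upwards [self_mem_nhdsWithin] with ε (hε : 0 < ε)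
    rw [hvj, zero_add]
    exact mul_nonpos_of_nonneg_of_nonpos hε.le (hw j hvj)

section QuadraticProgram

variable {nq nu m : ℕ} {F : Matrix (Fin nu) (Fin nu) ℝ} {P : Matrix (Fin nu) (Fin nq) ℝ}
  {H : Fin nu → ℝ} {W : Matrix (Fin m) (Fin nq) ℝ} {S : Matrix (Fin m) (Fin nu) ℝ}
  {p : Fin m → ℝ} {x : Fin nq → ℝ}

theorem qpCost_add (hF : F.IsHermitian) (x : Fin nq → ℝ) (u d : Fin nu → ℝ) :
    qpCost F P H x (u + d) =
      qpCost F P H x u + (F *ᵥ u + P *ᵥ x + H) ⬝ᵥ d + 1 / 2 * (d ⬝ᵥ F *ᵥ d) := by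
  have hsymm : d ⬝ᵥ F *ᵥ u = u ⬝ᵥ F *ᵥ d := by
    rw [dotProduct_mulVec, ← mulVec_transpose, dotProduct_comm,
      show Fᵀ = F by simpa [conjTranspose_eq_transpose_of_trivial] using hF.eq]
  simp only [qpCost, mulVec_add, dotProduct_add, add_dotProduct]
  rw [dotProduct_comm (F *ᵥ u) d, hsymm]
  ring

theorem qpCost_add_half_le_of_mem_multiplierCone (hF : F.IsHermitian) {a : Finset (Fin m)}
    {u w : Fin nu → ℝ} (hu : -(F *ᵥ u + P *ᵥ x + H) ∈ multiplierCone S a)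
    (hw : ∀ j ∈ a, (S *ᵥ (w - u)) j ≤ 0) :
    qpCost F P H x u + 1 / 2 * ((w - u) ⬝ᵥ F *ᵥ (w - u)) ≤ qpCost F P H x w := by
  obtain ⟨lam, hlam, hsupp, hgrad⟩ := hu
  have hcomp : lam ⬝ᵥ S *ᵥ (w - u) ≤ 0 := by
    refine Finset.sum_nonpos fun j _ => ?_
    by_cases hj : j ∈ a
    · exact mul_nonpos_of_nonneg_of_nonpos (hlam j) (hw j hj)
    · simp [hsupp j hj]
  have hslope : (F *ᵥ u + P *ᵥ x + H) ⬝ᵥ (w - u) = -(lam ⬝ᵥ S *ᵥ (w - u)) := by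
    rw [← neg_neg (F *ᵥ u + P *ᵥ x + H), hgrad, neg_dotProduct, mulVec_transpose,
      dotProduct_mulVec]
  calc qpCost F P H x u + 1 / 2 * ((w - u) ⬝ᵥ F *ᵥ (w - u))
      ≤ qpCost F P H x u + (F *ᵥ u + P *ᵥ x + H) ⬝ᵥ (w - u)
          + 1 / 2 * ((w - u) ⬝ᵥ F *ᵥ (w - u)) := by linarith
    _ = qpCost F P H x (u + (w - u)) := (qpCost_add hF x u (w - u)).symm
    _ = qpCost F P H x w := by rw [add_sub_cancel]

theorem eq_of_mem_multiplierCone_of_qpCost_le (hF : F.PosDef) {a : Finset (Fin m)}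
    {u w : Fin nu → ℝ} (hu : -(F *ᵥ u + P *ᵥ x + H) ∈ multiplierCone S a)
    (hw : ∀ j ∈ a, (S *ᵥ (w - u)) j ≤ 0) (hle : qpCost F P H x w ≤ qpCost F P H x u) :
    w = u := by
  have := qpCost_add_half_le_of_mem_multiplierCone hF.isHermitian hu hw
  by_contra hne
  have hpos := hF.dotProduct_mulVec_pos (sub_ne_zero.mpr hne)
  simp only [star_trivial] at hpos
  linarith

theorem dotProduct_nonneg_of_isMinOn (hF : F.IsHermitian) {u d : Fin nu → ℝ}
    (hu : u ∈ feasibleSet W S p x) (hmin : IsMinOn (qpCost F P H x) (feasibleSet W S p x) u)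
    (hd : ∀ j ∈ activeSet W S p x u, (S *ᵥ d) j ≤ 0) :
    0 ≤ (F *ᵥ u + P *ᵥ x + H) ⬝ᵥ d := by
  set g := (F *ᵥ u + P *ᵥ x + H) ⬝ᵥ d
  set β := d ⬝ᵥ F *ᵥ d
  have hstep : ∀ᶠ ε in 𝓝[>] (0 : ℝ), 0 ≤ g + ε * (1 / 2 * β) := by
    filter_upwards [self_mem_nhdsWithin, eventually_forall_add_mul_nonpos hu
      (w := S *ᵥ d) fun j hj => hd j (by simpa [activeSet] using hj)] with ε (hε : 0 < ε) hfeas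
    have hle := hmin (a := u + ε • d) fun j => by
      simpa [mulVec_add, mulVec_smul, add_right_comm, add_assoc] using hfeas j
    rw [Set.mem_ofPred_eq, qpCost_add hF, dotProduct_smul, mulVec_smul, dotProduct_smul,
      smul_dotProduct] at hle
    simp only [smul_eq_mul] at hle
    nlinarith
  refine ge_of_tendsto ?_ hstep
  simpa using (by fun_prop : Continuous fun ε : ℝ => g + ε * (1 / 2 * β)).tendsto 0
    |>.mono_left nhdsWithin_le_nhds

theorem neg_grad_mem_multiplierCone_of_isMinOn (hF : F.IsHermitian) {u : Fin nu → ℝ}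
    (hu : u ∈ feasibleSet W S p x) (hmin : IsMinOn (qpCost F P H x) (feasibleSet W S p x) u) :
    -(F *ᵥ u + P *ᵥ x + H) ∈ multiplierCone S (activeSet W S p x u) := by
  by_contra hnot
  obtain ⟨f, hfpos, hfcone⟩ := (isPolyhedral_multiplierCone S _).exists_linear_pos_of_notMem
    (zero_mem_multiplierCone S _) (fun _ ht _ => smul_mem_multiplierCone ht) hnot
  set d := (dotProductEquiv ℝ (Fin nu)).symm f
  have hf (v : Fin nu → ℝ) : f v = d ⬝ᵥ v := by
    rw [← dotProductEquiv_apply_apply, LinearEquiv.apply_symm_apply]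
  have hd : ∀ j ∈ activeSet W S p x u, (S *ᵥ d) j ≤ 0 := fun j hj => by
    simpa [hf, mulVec, dotProduct_comm] using hfcone _ (row_mem_multiplierCone hj)
  have := dotProduct_nonneg_of_isMinOn hF hu hmin hd
  rw [hf, dotProduct_neg, dotProduct_comm] at hfpos
  linarith

theorem eq_of_isMinOn_of_mem_multiplierCone (hF : F.PosDef) {a : Finset (Fin m)}
    {u ρ : Fin nu → ℝ} (hρ : ρ ∈ feasibleSet W S p x)
    (hρa : ∀ j ∈ a, (W *ᵥ x) j + (S *ᵥ ρ) j + p j = 0)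
    (hρcone : -(F *ᵥ ρ + P *ᵥ x + H) ∈ multiplierCone S a)
    (hmin : IsMinOn (qpCost F P H x) (feasibleSet W S p x) u) (hu : u ∈ feasibleSet W S p x) :
    u = ρ := by
  refine eq_of_mem_multiplierCone_of_qpCost_le hF hρcone (fun j hj => ?_) (hmin hρ)
  have := hu j
  have := hρa j hj
  simp only [mulVec_sub, Pi.sub_apply]
  linarith

theorem eq_of_isMinOn_activeSet (hF : F.PosDef) {u ρ : Fin nu → ℝ}
    (hu : u ∈ feasibleSet W S p x) (hmin : IsMinOn (qpCost F P H x) (feasibleSet W S p x) u)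
    (hρa : ∀ j ∈ activeSet W S p x u, (W *ᵥ x) j + (S *ᵥ ρ) j + p j = 0)
    (hρmin : IsMinOn (qpCost F P H x)
      {w | ∀ j ∈ activeSet W S p x u, (W *ᵥ x) j + (S *ᵥ w) j + p j = 0} ρ) :
    ρ = u := by
  have hua (j) (hj : j ∈ activeSet W S p x u) : (W *ᵥ x) j + (S *ᵥ u) j + p j = 0 := by
    simpa [activeSet] using hj
  refine eq_of_mem_multiplierCone_of_qpCost_le hF
    (neg_grad_mem_multiplierCone_of_isMinOn hF.isHermitian hu hmin) (fun j hj => ?_)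
    (hρmin hua)
  have := hua j hj
  have := hρa j hj
  simp only [mulVec_sub, Pi.sub_apply]
  linarith

end QuadraticProgram

section Regions

variable {nq nu m : ℕ} {F : Matrix (Fin nu) (Fin nu) ℝ} {P : Matrix (Fin nu) (Fin nq) ℝ}
  {H : Fin nu → ℝ} {W : Matrix (Fin m) (Fin nq) ℝ} {S : Matrix (Fin m) (Fin nu) ℝ}
  {p : Fin m → ℝ} {K : Finset (Fin m) → Matrix (Fin nu) (Fin nq) ℝ}
  {s : Finset (Fin m) → (Fin nu → ℝ)} {a : Finset (Fin m)}

theorem mem_Xa_iff {x : Fin nq → ℝ} :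
    x ∈ Xa F P H W S p K s a ↔ rhoA K s a x ∈ feasibleSet W S p x ∧
      -(F *ᵥ rhoA K s a x + P *ᵥ x + H) ∈ multiplierCone S a :=
  Iff.rfl

theorem isPolyhedral_Xa : IsPolyhedral (Xa F P H W S p K s a) := by
  have hfeas (x : Fin nq → ℝ) :
      (W + S * K a) *ᵥ x + (S *ᵥ s a + p) = W *ᵥ x + S *ᵥ rhoA K s a x + p := by
    simp only [rhoA, add_mulVec, mulVec_add, mulVec_mulVec]
    abel
  have hgrad (x : Fin nq → ℝ) :
      -(F * K a + P) *ᵥ x + -(F *ᵥ s a + H) = -(F *ᵥ rhoA K s a x + P *ᵥ x + H) := by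
    simp only [rhoA, neg_mulVec, add_mulVec, mulVec_add, mulVec_mulVec]
    abel
  convert (isPolyhedral_Iic_zero.preimage_mulVec_add (W + S * K a) (S *ᵥ s a + p)).inter
    ((isPolyhedral_multiplierCone S a).preimage_mulVec_add (-(F * K a + P)) (-(F *ᵥ s a + H)))
    using 1
  ext x
  simp only [mem_Xa_iff, Set.mem_inter_iff, Set.mem_ofPred_eq, hfeas, hgrad, Set.mem_Iic,
    Pi.le_def, feasibleSet, Pi.add_apply, Pi.zero_apply]

end Regions

theorem parametric_qp_piecewise_affine (nq nu m : ℕ)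
    (F : Matrix (Fin nu) (Fin nu) ℝ) (P : Matrix (Fin nu) (Fin nq) ℝ)
    (H : Fin nu → ℝ)
    (W : Matrix (Fin m) (Fin nq) ℝ) (S : Matrix (Fin m) (Fin nu) ℝ) (p : Fin m → ℝ)
    (hF : F.PosDef)
    (K : Finset (Fin m) → Matrix (Fin nu) (Fin nq) ℝ)
    (s : Finset (Fin m) → (Fin nu → ℝ))
    -- ρ^a satisfies the active constraints as equalities
    (hact : ∀ (a : Finset (Fin m)) (x : Fin nq → ℝ), ∀ j ∈ a,
      W.mulVec x j + S.mulVec (rhoA K s a x) j + p j = 0)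
    -- ρ^a solves the equality-constrained problem with constraints in `a` active
    (hmin : ∀ (a : Finset (Fin m)) (x : Fin nq → ℝ),
      IsMinOn (qpCost F P H x)
        {u | ∀ j ∈ a, W.mulVec x j + S.mulVec u j + p j = 0} (rhoA K s a x))
    -- the optimal solution map u⋆
    (ustar : (Fin nq → ℝ) → (Fin nu → ℝ))
    (hstar : ∀ x : Fin nq → ℝ,
      (∃ u, ∀ j, W.mulVec x j + S.mulVec u j + p j ≤ 0) →
      (∀ j, W.mulVec x j + S.mulVec (ustar x) j + p j ≤ 0) ∧
      IsMinOn (qpCost F P H x)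
        {u | ∀ j, W.mulVec x j + S.mulVec u j + p j ≤ 0} (ustar x)) :
    -- each X_a is a polyhedron
    (∀ a : Finset (Fin m), ∃ (k : ℕ) (L : Matrix (Fin k) (Fin nq) ℝ) (l : Fin k → ℝ),
      Xa F P H W S p K s a = {x | ∀ i, L.mulVec x i + l i ≤ 0}) ∧
    -- the regions X_a cover the feasible parameter set
    (∀ x : Fin nq → ℝ, (∃ u, ∀ j, W.mulVec x j + S.mulVec u j + p j ≤ 0) →
      ∃ a : Finset (Fin m), x ∈ Xa F P H W S p K s a) ∧
    -- on each X_a the optimizer agrees with the affine policy ρ^a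
    (∀ (a : Finset (Fin m)) (x : Fin nq → ℝ), x ∈ Xa F P H W S p K s a →
      ustar x = rhoA K s a x) := by
  refine ⟨fun a => isPolyhedral_Xa.exists_matrix, fun x hx => ?_, fun a x hx => ?_⟩
  · obtain ⟨hu, hopt⟩ := hstar x hx
    set A := activeSet W S p x (ustar x)
    have hρ : rhoA K s A x = ustar x := eq_of_isMinOn_activeSet hF hu hopt (hact A x) (hmin A x)
    refine ⟨A, mem_Xa_iff.mpr ?_⟩
    rw [hρ]
    exact ⟨hu, neg_grad_mem_multiplierCone_of_isMinOn hF.isHermitian hu hopt⟩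
  · obtain ⟨hρ, hcone⟩ := mem_Xa_iff.mp hx
    obtain ⟨hu, hopt⟩ := hstar x ⟨_, hρ⟩
    exact eq_of_isMinOn_of_mem_multiplierCone hF hρ (hact a x) hcone hopt hu
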